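/- arXiv:2105.13026 — 3 statements merged into one kernel-verified Lean document; each statement's English description precedes it below -/
import Mathlib

section
/- Let p be a monic polynomial of degree d with distinct roots λ_1,…,λ_d, and let δ_j(z) = p(z)/((z−λ_j) p'(λ_j)) be the Lagrange basis polynomials. Then for each j, δ_j(z)^2 = δ_j(z) − p(z) · Σ_{l≠j} (σ_{jl} δ_j(z) + σ_{lj} δ_l(z)), where σ_{jl} = 1/(p'(λ_l)(λ_j − λ_l)). -/
open Polynomial Finset

/-- Lagrange basis polynomial `δ_j` evaluated at `z`. -/
noncomputable def lagrange {d : ℕ} (lam : Fin d → ℂ) (j : Fin d) (z : ℂ) : ℂ :=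
  ∏ l ∈ Finset.univ.erase j, (z - lam l) / (lam j - lam l)

/-- `σ_{jl} = 1/(p'(λ_l)(λ_j - λ_l))` where `p = ∏ (X - λ_i)`. -/
noncomputable def sigma {d : ℕ} (lam : Fin d → ℂ) (j l : Fin d) : ℂ :=
  1 / ((Polynomial.derivative (∏ i, (X - C (lam i)))).eval (lam l) * (lam j - lam l))

lemma lagrange_eq_eval {d : ℕ} (lam : Fin d → ℂ) (j : Fin d) (z : ℂ) :
    lagrange lam j z = (Lagrange.basis Finset.univ lam j).eval z := by
  simp [lagrange, Lagrange.basis, Lagrange.basisDivisor, eval_prod, div_eq_inv_mul, mul_comm]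

lemma sum_lagrange {d : ℕ} (hd : 1 ≤ d) (lam : Fin d → ℂ) (hinj : Function.Injective lam) (z : ℂ) :
    ∑ l, lagrange lam l z = 1 := by
  have h := Lagrange.sum_basis (s := Finset.univ) (v := lam) hinj.injOn
    (univ_nonempty_iff.mpr (Fin.pos_iff_nonempty.mp hd))
  have := congrArg (eval z) h
  simpa [eval_finset_sum, lagrange_eq_eval] using this

lemma deriv_eval {d : ℕ} (lam : Fin d → ℂ) (l : Fin d) :
    (Polynomial.derivative (∏ i, (X - C (lam i)))).eval (lam l)
      = ∏ i ∈ Finset.univ.erase l, (lam l - lam i) := by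
  have : (∏ i, (X - C (lam i))) = Lagrange.nodal Finset.univ lam := rfl
  rw [this, Lagrange.eval_nodal_derivative_eval_node_eq (mem_univ l), Lagrange.eval_nodal]

lemma D_ne_zero {d : ℕ} {lam : Fin d → ℂ} (hinj : Function.Injective lam) (j : Fin d) :
    (∏ i ∈ Finset.univ.erase j, (lam j - lam i)) ≠ 0 := by
  refine prod_ne_zero_iff.mpr fun i hi => sub_ne_zero.mpr ?_
  exact fun h => (mem_erase.mp hi).1 (hinj h.symm)

lemma lagrange_div {d : ℕ} (lam : Fin d → ℂ) (j : Fin d) (z : ℂ) :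
    lagrange lam j z = (∏ i ∈ Finset.univ.erase j, (z - lam i)) /
      (∏ i ∈ Finset.univ.erase j, (lam j - lam i)) := by
  simp [lagrange, prod_div_distrib]

lemma key {d : ℕ} {lam : Fin d → ℂ} (hinj : Function.Injective lam) {j l : Fin d}
    (hlj : l ≠ j) (z : ℂ) :
    (∏ i, (X - C (lam i))).eval z *
        (sigma lam j l * lagrange lam j z + sigma lam l j * lagrange lam l z)
      = lagrange lam j z * lagrange lam l z := by
  have hDj := D_ne_zero hinj j
  have hDl := D_ne_zero hinj l
  have hjl : lam j - lam l ≠ 0 := sub_ne_zero.mpr fun h => hlj (hinj h.symm)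
  have hlj' : lam l - lam j ≠ 0 := sub_ne_zero.mpr fun h => hlj (hinj h)
  set B : ℂ := ∏ i ∈ (Finset.univ.erase j).erase l, (z - lam i) with hB
  have hAj : ∏ i ∈ Finset.univ.erase j, (z - lam i) = (z - lam l) * B :=
    (mul_prod_erase _ _ (mem_erase.mpr ⟨hlj, mem_univ l⟩)).symm
  have hAl : ∏ i ∈ Finset.univ.erase l, (z - lam i) = (z - lam j) * B := by
    rw [← mul_prod_erase _ _ (mem_erase.mpr ⟨Ne.symm hlj, mem_univ j⟩), hB,
      Finset.erase_right_comm]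
  have hP : (∏ i, (X - C (lam i))).eval z = (z - lam j) * ((z - lam l) * B) := by
    rw [eval_prod]
    simp only [eval_mul, eval_sub, eval_X, eval_C]
    rw [← mul_prod_erase _ _ (mem_univ j), hAj]
  rw [hP, sigma, sigma, deriv_eval, deriv_eval, lagrange_div, lagrange_div, hAj, hAl]
  field_simp
  ring

theorem stmt0 {d : ℕ} (hd : 2 ≤ d) (lam : Fin d → ℂ) (hinj : Function.Injective lam)
    (j : Fin d) (z : ℂ) :
    (lagrange lam j z) ^ 2 =
      lagrange lam j z -
        (∏ i, (X - C (lam i))).eval z *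
          ∑ l ∈ Finset.univ.erase j,
            (sigma lam j l * lagrange lam j z + sigma lam l j * lagrange lam l z) := by
  rw [Finset.mul_sum]
  have hsum : ∀ l ∈ Finset.univ.erase j,
      (∏ i, (X - C (lam i))).eval z *
          (sigma lam j l * lagrange lam j z + sigma lam l j * lagrange lam l z)
        = lagrange lam j z * lagrange lam l z := fun l hl =>
    key hinj (mem_erase.mp hl).1 z
  rw [Finset.sum_congr rfl hsum, ← Finset.mul_sum]
  have h1 : ∑ l ∈ Finset.univ.erase j, lagrange lam l z = 1 - lagrange lam j z := by
    have := sum_lagrange (le_trans one_le_two hd) lam hinj z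
    rw [← Finset.add_sum_erase _ _ (mem_univ j)] at this
    linear_combination this
  rw [h1]; ring
end

section
/- Let p be a monic polynomial of degree d with distinct roots λ_1,…,λ_d and Lagrange basis polynomials δ_j. Then for j ≠ l, δ_j(z) δ_l(z) = p(z) · (σ_{jl} δ_j(z) + σ_{lj} δ_l(z)), where σ_{jl} = 1/(p'(λ_l)(λ_j − λ_l)). -/
open Polynomial Finset

lemma eval_deriv {d : ℕ} (lam : Fin d → ℂ) (hinj : Function.Injective lam) (l : Fin d) :
    (Polynomial.derivative (∏ i, (X - C (lam i)))).eval (lam l) =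
      ∏ m ∈ Finset.univ.erase l, (lam l - lam m) := by
  have h1 : (∏ i, (X - C (lam i))) =
      (Multiset.map (fun a => X - C a) (Finset.univ.val.map lam)).prod := by
    rw [Multiset.map_map]; rfl
  rw [h1, eval_multiset_prod_X_sub_C_derivative
    (Multiset.mem_map.2 ⟨l, Finset.mem_univ_val l, rfl⟩),
    ← Multiset.map_erase _ hinj, Multiset.map_map, ← Finset.erase_val]
  rfl

theorem stmt1 {d : ℕ} (hd : 2 ≤ d) (lam : Fin d → ℂ) (hinj : Function.Injective lam)
    (j l : Fin d) (hjl : j ≠ l) (z : ℂ) :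
    lagrange lam j z * lagrange lam l z =
      (∏ i, (X - C (lam i))).eval z *
        (sigma lam j l * lagrange lam j z + sigma lam l j * lagrange lam l z) := by
  have hsub : ∀ a b : Fin d, a ≠ b → lam a - lam b ≠ 0 := fun a b h => by
    exact sub_ne_zero.2 (fun he => h (hinj he))
  set A := ∏ m ∈ Finset.univ.erase j, (z - lam m) with hA
  set B := ∏ m ∈ Finset.univ.erase l, (z - lam m) with hB
  set Dj := ∏ m ∈ Finset.univ.erase j, (lam j - lam m) with hDj
  set Dl := ∏ m ∈ Finset.univ.erase l, (lam l - lam m) with hDl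
  set Cc := ∏ m ∈ (Finset.univ.erase j).erase l, (z - lam m) with hCc
  have hDj0 : Dj ≠ 0 := Finset.prod_ne_zero_iff.2 fun m hm =>
    hsub j m (Finset.ne_of_mem_erase hm).symm
  have hDl0 : Dl ≠ 0 := Finset.prod_ne_zero_iff.2 fun m hm =>
    hsub l m (Finset.ne_of_mem_erase hm).symm
  have hlagj : lagrange lam j z = A / Dj := by
    rw [lagrange, Finset.prod_div_distrib]
  have hlagl : lagrange lam l z = B / Dl := by
    rw [lagrange, Finset.prod_div_distrib]
  have hAeq : A = (z - lam l) * Cc := by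
    rw [hA, hCc, (Finset.mul_prod_erase _ _ (Finset.mem_erase.2 ⟨hjl.symm, Finset.mem_univ l⟩)).symm]
  have hBeq : B = (z - lam j) * Cc := by
    rw [hB, hCc, Finset.erase_right_comm,
      (Finset.mul_prod_erase _ _ (Finset.mem_erase.2 ⟨hjl, Finset.mem_univ j⟩)).symm]
  have hPeq : (∏ i, (X - C (lam i))).eval z = (z - lam j) * A := by
    rw [eval_prod]
    simp only [eval_sub, eval_X, eval_C]
    rw [hA, (Finset.mul_prod_erase _ _ (Finset.mem_univ j)).symm]
  rw [hlagj, hlagl, hPeq, sigma, sigma, eval_deriv lam hinj, eval_deriv lam hinj, ← hDj, ← hDl, hAeq, hBeq]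
  have h1 : lam j - lam l ≠ 0 := hsub j l hjl
  have h2 : lam l - lam j ≠ 0 := hsub l j hjl.symm
  field_simp
  ring
end

section
/- Let p be monic of degree d with distinct roots, K = p^{-1}(M), and for f : M → ℂ^d define (Lf)(z) = Σ_{j=1}^d δ_j(z) f_j(p(z)) on K. Then L is multiplicative with respect to the polyproduct: L(f ⊛ g) = (Lf)(Lg) pointwise on K, where (f ⊛ g)_j(w) = f_j(w) g_j(w) − w Σ_{l≠j} σ_{jl} (f_j(w) − f_l(w))(g_j(w) − g_l(w)). -/
open Polynomial Finset

/-- The polyproduct `f ⊛ g` of `ℂ^d`-valued functions, componentwise. -/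
noncomputable def polyprod {d : ℕ} (lam : Fin d → ℂ) (f g : ℂ → Fin d → ℂ)
    (w : ℂ) (j : Fin d) : ℂ :=
  f w j * g w j -
    w * ∑ l ∈ Finset.univ.erase j,
      sigma lam j l * (f w j - f w l) * (g w j - g w l)


/-- The multicentric representation `(Lf)(z) = Σ_j δ_j(z) f_j(p(z))`. -/
noncomputable def mcL {d : ℕ} (lam : Fin d → ℂ) (f : ℂ → Fin d → ℂ) (z : ℂ) : ℂ :=
  ∑ j, lagrange lam j z * f ((∏ i, (X - C (lam i))).eval z) j

/-- Abstract combinatorial key lemma. -/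
lemma key_s4 {d : ℕ} (δ F G : Fin d → ℂ) (s : Fin d → Fin d → ℂ) (w : ℂ)
    (hB : ∑ j, δ j = 1)
    (hA : ∀ j k, δ j * δ k * (F j * (G k - G j)) =
      w * (s j k * δ j + s k j * δ k) * (F j * (G k - G j))) :
    ∑ j, δ j * (F j * G j - w * ∑ k ∈ Finset.univ.erase j,
        s j k * (F j - F k) * (G j - G k))
      = (∑ j, δ j * F j) * (∑ j, δ j * G j) := by
  have herase : ∀ j : Fin d, ∑ k ∈ Finset.univ.erase j,
      s j k * (F j - F k) * (G j - G k) = ∑ k, s j k * (F j - F k) * (G j - G k) := by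
    intro j
    refine Finset.sum_erase _ ?_
    simp
  have hrhs : (∑ j, δ j * F j) * (∑ j, δ j * G j)
      = ∑ j, ∑ k, δ j * δ k * (F j * G k) := by
    rw [Finset.sum_mul_sum]
    exact Finset.sum_congr rfl fun j _ => Finset.sum_congr rfl fun k _ => by ring
  have hdiag : ∑ j, δ j * (F j * G j) = ∑ j, ∑ k, δ j * δ k * (F j * G j) := by
    refine Finset.sum_congr rfl fun j _ => ?_
    calc δ j * (F j * G j) = (∑ k, δ k) * (δ j * (F j * G j)) := by rw [hB, one_mul]
      _ = ∑ k, δ k * (δ j * (F j * G j)) := by rw [Finset.sum_mul]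
      _ = ∑ k, δ j * δ k * (F j * G j) := Finset.sum_congr rfl fun k _ => by ring
  have hBsum : ∑ j, δ j * (w * ∑ k, s j k * (F j - F k) * (G j - G k))
      = ∑ j, ∑ k, w * s j k * δ j * ((F j - F k) * (G j - G k)) := by
    refine Finset.sum_congr rfl fun j _ => ?_
    rw [Finset.mul_sum, Finset.mul_sum]
    exact Finset.sum_congr rfl fun k _ => by ring
  have main : (∑ j, ∑ k, δ j * δ k * (F j * G j)) - (∑ j, ∑ k, δ j * δ k * (F j * G k))
      = ∑ j, ∑ k, w * s j k * δ j * ((F j - F k) * (G j - G k)) := by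
    rw [← Finset.sum_sub_distrib]
    simp_rw [← Finset.sum_sub_distrib]
    have step1 : ∀ j k : Fin d, δ j * δ k * (F j * G j) - δ j * δ k * (F j * G k)
        = w * s j k * δ j * (F j * (G j - G k)) + w * s k j * δ k * (F j * (G j - G k)) := by
      intro j k
      linear_combination - hA j k
    simp_rw [step1, Finset.sum_add_distrib]
    rw [Finset.sum_comm (f := fun j k => w * s k j * δ k * (F j * (G j - G k)))]
    rw [← Finset.sum_add_distrib]
    refine Finset.sum_congr rfl fun j _ => ?_
    rw [← Finset.sum_add_distrib]
    exact Finset.sum_congr rfl fun k _ => by ring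
  have lhs_eq : ∑ j, δ j * (F j * G j - w * ∑ k ∈ Finset.univ.erase j,
        s j k * (F j - F k) * (G j - G k))
      = (∑ j, δ j * (F j * G j)) -
        ∑ j, δ j * (w * ∑ k, s j k * (F j - F k) * (G j - G k)) := by
    rw [← Finset.sum_sub_distrib]
    refine Finset.sum_congr rfl fun j _ => ?_
    rw [herase j]
    ring
  rw [lhs_eq, hrhs]
  linear_combination hdiag + main - hBsum

theorem stmt4 {d : ℕ} (hd : 2 ≤ d) (lam : Fin d → ℂ) (hinj : Function.Injective lam)
    (M : Set ℂ) (f g : ℂ → Fin d → ℂ) :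
    ∀ z : ℂ, (∏ i, (X - C (lam i))).eval z ∈ M →
      mcL lam (polyprod lam f g) z = mcL lam f z * mcL lam g z := by
  have hne : Nonempty (Fin d) := Fin.pos_iff_nonempty.mp (by omega)
  intro z _
  set w : ℂ := (∏ i, (X - C (lam i))).eval z with hw
  -- derivative evaluation
  have hder : ∀ l : Fin d, (Polynomial.derivative (∏ i, (X - C (lam i)))).eval (lam l)
      = ∏ i ∈ Finset.univ.erase l, (lam l - lam i) := by
    intro l
    have h1 := Lagrange.eval_nodal_derivative_eval_node_eq (s := Finset.univ) (v := lam)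
      (Finset.mem_univ l)
    rw [Lagrange.eval_nodal] at h1
    exact h1
  -- sum of lagrange basis = 1
  have hsum : ∑ j, lagrange lam j z = 1 := by
    have h1 : ∀ j, lagrange lam j z = (Lagrange.basis Finset.univ lam j).eval z := by
      intro j
      rw [Lagrange.basis, eval_prod]
      refine Finset.prod_congr rfl fun l _ => ?_
      rw [Lagrange.basisDivisor, eval_mul, eval_C, eval_sub, eval_X, eval_C, div_eq_inv_mul]
    simp_rw [h1, ← eval_finset_sum]
    rw [Lagrange.sum_basis hinj.injOn Finset.univ_nonempty, eval_one]
  -- key multiplicative identity for basis functions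
  have hA : ∀ j k, lagrange lam j z * lagrange lam k z * (f w j * (g w k - g w j)) =
      w * (sigma lam j k * lagrange lam j z + sigma lam k j * lagrange lam k z) *
        (f w j * (g w k - g w j)) := by
    intro j k
    rcases eq_or_ne j k with rfl | hjk
    · simp
    have hmul : lagrange lam j z * lagrange lam k z
        = w * (sigma lam j k * lagrange lam j z + sigma lam k j * lagrange lam k z) := by
      set Nj : ℂ := ∏ l ∈ Finset.univ.erase j, (z - lam l) with hNj
      set Nk : ℂ := ∏ l ∈ Finset.univ.erase k, (z - lam l) with hNk
      set Dj : ℂ := ∏ l ∈ Finset.univ.erase j, (lam j - lam l) with hDj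
      set Dk : ℂ := ∏ l ∈ Finset.univ.erase k, (lam k - lam l) with hDk
      have hδj : lagrange lam j z = Nj / Dj := by
        rw [lagrange, Finset.prod_div_distrib]
      have hδk : lagrange lam k z = Nk / Dk := by
        rw [lagrange, Finset.prod_div_distrib]
      have hsj : sigma lam j k = 1 / (Dk * (lam j - lam k)) := by
        rw [sigma, hder k]
      have hsk : sigma lam k j = 1 / (Dj * (lam k - lam j)) := by
        rw [sigma, hder j]
      have hwj : w = (z - lam j) * Nj := by
        rw [hw, eval_prod]
        simp only [eval_sub, eval_X, eval_C]
        exact (Finset.mul_prod_erase _ _ (Finset.mem_univ j)).symm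
      have hwk : w = (z - lam k) * Nk := by
        rw [hw, eval_prod]
        simp only [eval_sub, eval_X, eval_C]
        exact (Finset.mul_prod_erase _ _ (Finset.mem_univ k)).symm
      have hDj0 : Dj ≠ 0 := by
        rw [hDj, Finset.prod_ne_zero_iff]
        intro l hl
        rw [sub_ne_zero]
        exact fun h => (Finset.mem_erase.mp hl).1 (hinj h).symm
      have hDk0 : Dk ≠ 0 := by
        rw [hDk, Finset.prod_ne_zero_iff]
        intro l hl
        rw [sub_ne_zero]
        exact fun h => (Finset.mem_erase.mp hl).1 (hinj h).symm
      have hjk0 : lam j - lam k ≠ 0 := sub_ne_zero.mpr fun h => hjk (hinj h)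
      have hkj0 : lam k - lam j ≠ 0 := sub_ne_zero.mpr fun h => hjk (hinj h).symm
      rw [hδj, hδk, hsj, hsk]
      have hfac : (z - lam j) * Nj = (z - lam k) * Nk := by rw [← hwj, ← hwk]
      field_simp
      linear_combination (-((lam k - lam j)) * Nj) * hwk +
        (-((lam j - lam k)) * Nk) * hwj
    linear_combination (f w j * (g w k - g w j)) * hmul
  have := key_s4 (fun j => lagrange lam j z) (fun j => f w j) (fun j => g w j)
    (sigma lam) w hsum hA
  simpa [mcL, polyprod, ← hw] using this
end
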